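/- Correctness of the history machine: for any closed term u, if the continuation machine starting from (u, halt, ∅, ∅) terminates with final result list R (reaching (n, halt, ∅, R') with answer list n·R'), then the history machine starting from (u, halt, ∅, ∅, ∅)_u produces the same multiset (in fact the same list) of results. -/
import Mathlib


/-- Terms: variables, numerals, successor, let-bindings, and binary choice. -/
inductive Tm : Type
  | var : String → Tm
  | num : ℕ → Tm
  | suc : Tm → Tm
  | lett : String → Tm → Tm → Tm
  | choose : Tm → Tm → Tm
deriving DecidableEq

/-- Substitution of a numeral for a variable. -/
def Tm.subst (x : String) (n : ℕ) : Tm → Tm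
  | .var y => if y = x then .num n else .var y
  | .num m => .num m
  | .suc t => .suc (t.subst x n)
  | .lett y t u => .lett y (t.subst x n) (if y = x then u else u.subst x n)
  | .choose a b => .choose (a.subst x n) (b.subst x n)

/-- Machine continuations: halt, successor frame, and let frame. -/
inductive Kont : Type
  | halt : Kont
  | suc : Kont → Kont
  | lett : String → Tm → Kont → Kont
deriving DecidableEq

/-- A choice `i ∈ {1, 2}` is encoded as a `Bool`: `false` is choice 1, `true` is choice 2.
A history is a list of choices; `P·i` is `P ++ [i]`. -/
abbrev Hist : Type := List Bool

/-- Successor on reversed histories: `next(P·1) = P·2`, `next(P·2) = next(P)`. -/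
def nextRev : List Bool → Option (List Bool)
  | [] => none
  | false :: P => some (true :: P)
  | true :: P => nextRev P

/-- The successor function `next` on histories (`none` when undefined). -/
def nextHist (P : Hist) : Option Hist := (nextRev P.reverse).map List.reverse

/-- History-machine configurations `(t, K, P, F, R)_u` (the fixed initial term `u`
is a parameter of the step relation). -/
structure HCfg : Type where
  tm : Tm
  k : Kont
  past : Hist
  fut : Hist
  res : List ℕ
deriving DecidableEq

/-- The reduction relation of the history machine, for a fixed initial term `u`. -/
inductive HStep (u : Tm) : HCfg → HCfg → Prop
  | suc (t K P F R) : HStep u ⟨.suc t, K, P, F, R⟩ ⟨t, .suc K, P, F, R⟩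
  | sucNum (n K P F R) : HStep u ⟨.num n, .suc K, P, F, R⟩ ⟨.num (n + 1), K, P, F, R⟩
  | lett (x t t' K P F R) : HStep u ⟨.lett x t t', K, P, F, R⟩ ⟨t, .lett x t' K, P, F, R⟩
  | lettNum (n x t' K P F R) :
      HStep u ⟨.num n, .lett x t' K, P, F, R⟩ ⟨t'.subst x n, K, P, F, R⟩
  | chooseInit (n₁ n₂ K P R) :
      HStep u ⟨.choose (.num n₁) (.num n₂), K, P, [], R⟩
              ⟨.choose (.num n₁) (.num n₂), K, P, [false], R⟩
  | chooseFut (n₁ n₂ K P i F R) :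
      HStep u ⟨.choose (.num n₁) (.num n₂), K, P, i :: F, R⟩
              ⟨.num (if i then n₂ else n₁), K, P ++ [i], F, R⟩
  | haltReplay (n P F' R) (h : nextHist P = some F') :
      HStep u ⟨.num n, .halt, P, [], R⟩ ⟨u, .halt, [], F', n :: R⟩

/-- Continuation-machine configurations `(t, K, s, R)`. -/
structure CCfg : Type where
  tm : Tm
  k : Kont
  soup : List (ℕ × Kont)
  res : List ℕ
deriving DecidableEq

/-- The reduction relation of the continuation machine. -/
inductive CStep : CCfg → CCfg → Prop
  | suc (t K s R) : CStep ⟨.suc t, K, s, R⟩ ⟨t, .suc K, s, R⟩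
  | sucNum (n K s R) : CStep ⟨.num n, .suc K, s, R⟩ ⟨.num (n + 1), K, s, R⟩
  | lett (x t u K s R) : CStep ⟨.lett x t u, K, s, R⟩ ⟨t, .lett x u K, s, R⟩
  | lettNum (n x u K s R) : CStep ⟨.num n, .lett x u K, s, R⟩ ⟨u.subst x n, K, s, R⟩
  | choose (n₁ n₂ K s R) :
      CStep ⟨.choose (.num n₁) (.num n₂), K, s, R⟩ ⟨.num n₁, K, (n₂, K) :: s, R⟩
  | halt (n n' K s R) : CStep ⟨.num n, .halt, (n', K) :: s, R⟩ ⟨.num n', K, s, n :: R⟩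

/-- Replay property: from the initial term with any future extending `P`,
the history machine reaches the given configuration, consuming exactly `P`. -/
def Replay (u t : Tm) (K : Kont) (P : Hist) : Prop :=
  ∀ F R, Relation.ReflTransGen (HStep u) ⟨u, .halt, [], P ++ F, R⟩ ⟨t, K, P, F, R⟩

/-- The soup of the continuation machine matches the past of the history machine. -/
inductive Match (u : Tm) : List (ℕ × Kont) → Hist → Prop
  | nil : Match u [] []
  | true_ {s P} : Match u s P → Match u s (P ++ [true])
  | cons {n K s P} : Match u s P → Replay u (.num n) K (P ++ [true]) →
      Match u ((n, K) :: s) (P ++ [false])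

lemma nextHist_append_false (P : Hist) : nextHist (P ++ [false]) = some (P ++ [true]) := by
  simp [nextHist, nextRev, List.reverse_append]

lemma nextHist_append_true (P : Hist) : nextHist (P ++ [true]) = nextHist P := by
  simp [nextHist, nextRev, List.reverse_append]

lemma match_nil_next {u : Tm} {s P} (h : Match u s P) (hs : s = []) : nextHist P = none := by
  induction h with
  | nil => rfl
  | true_ _ ih => rw [nextHist_append_true]; exact ih hs
  | cons _ _ _ => exact absurd hs (by simp)

lemma match_cons_next {u : Tm} {n : ℕ} {K : Kont} {s₀ s P} (h : Match u s P)
    (hs : s = (n, K) :: s₀) :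
    ∃ P₀, nextHist P = some (P₀ ++ [true]) ∧ Match u s₀ (P₀ ++ [true]) ∧
      Replay u (.num n) K (P₀ ++ [true]) := by
  induction h with
  | nil => exact absurd hs (by simp)
  | true_ _ ih =>
      obtain ⟨P₀, h1, h2, h3⟩ := ih hs
      exact ⟨P₀, by rw [nextHist_append_true]; exact h1, h2, h3⟩
  | cons hm hrep _ =>
      injection hs with h1 h2
      injection h1 with h3 h4
      subst h2 h3 h4
      exact ⟨_, nextHist_append_false _, Match.true_ hm, hrep⟩

lemma step_sim (u : Tm) {c b : CCfg} (hs : CStep c b) (P : Hist)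
    (hm : Match u c.soup P) (hr : Replay u c.tm c.k P) :
    ∃ Pb, Relation.ReflTransGen (HStep u) ⟨c.tm, c.k, P, [], c.res⟩ ⟨b.tm, b.k, Pb, [], b.res⟩ ∧
      Match u b.soup Pb ∧ Replay u b.tm b.k Pb := by
  cases hs with
  | suc t K s R =>
      exact ⟨P, .single (.suc t K P [] R), hm, fun F R' => (hr F R').tail (.suc t K P F R')⟩
  | sucNum n K s R =>
      exact ⟨P, .single (.sucNum n K P [] R), hm, fun F R' => (hr F R').tail (.sucNum n K P F R')⟩
  | lett x t t' K s R =>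
      exact ⟨P, .single (.lett x t t' K P [] R), hm,
        fun F R' => (hr F R').tail (.lett x t t' K P F R')⟩
  | lettNum n x t' K s R =>
      exact ⟨P, .single (.lettNum n x t' K P [] R), hm,
        fun F R' => (hr F R').tail (.lettNum n x t' K P F R')⟩
  | choose n₁ n₂ K s R =>
      refine ⟨P ++ [false], ?_, ?_, ?_⟩
      · refine Relation.ReflTransGen.head (.chooseInit n₁ n₂ K P R) (.single ?_)
        simpa using HStep.chooseFut n₁ n₂ K P false [] R
      · refine Match.cons hm (fun F R' => ?_)
        have := (hr (true :: F) R').tail (.chooseFut n₁ n₂ K P true F R')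
        simpa using this
      · intro F R'
        have := (hr (false :: F) R').tail (.chooseFut n₁ n₂ K P false F R')
        simpa using this
  | halt n n' K s R =>
      obtain ⟨P₀, h1, h2, h3⟩ := match_cons_next hm rfl
      refine ⟨P₀ ++ [true], ?_, h2, h3⟩
      refine Relation.ReflTransGen.head (.haltReplay n P (P₀ ++ [true]) R h1) ?_
      have := h3 [] (n :: R)
      simpa using this

lemma run_sim (u : Tm) {c c' : CCfg} (h : Relation.ReflTransGen CStep c c') :
    ∀ P, Match u c.soup P → Replay u c.tm c.k P →
    ∃ P', Relation.ReflTransGen (HStep u) ⟨c.tm, c.k, P, [], c.res⟩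
        ⟨c'.tm, c'.k, P', [], c'.res⟩ ∧ Match u c'.soup P' ∧ Replay u c'.tm c'.k P' := by
  induction h using Relation.ReflTransGen.head_induction_on with
  | refl => exact fun P hm hr => ⟨P, .refl, hm, hr⟩
  | head hs h ih =>
      intro P hm hr
      obtain ⟨Pb, hseg, hmb, hrb⟩ := step_sim u hs P hm hr
      obtain ⟨P', hrest, hm', hr'⟩ := ih Pb hmb hrb
      exact ⟨P', hseg.trans hrest, hm', hr'⟩

/-- Correctness of the history machine: if the continuation machine run from
`(u, halt, ∅, ∅)` terminates with answer list `n·R'`, then the history machine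
run from `(u, halt, ∅, ∅, ∅)_u` terminates (is stuck: `next` of its past is
undefined) with the same list of results. -/
theorem history_machine_correct (u : Tm) (n : ℕ) (R' : List ℕ)
    (h : Relation.ReflTransGen CStep ⟨u, .halt, [], []⟩ ⟨.num n, .halt, [], R'⟩) :
    ∃ (m : ℕ) (P : Hist) (R'' : List ℕ),
      Relation.ReflTransGen (HStep u) ⟨u, .halt, [], [], []⟩ ⟨.num m, .halt, P, [], R''⟩ ∧
      nextHist P = none ∧
      m :: R'' = n :: R' := by
  obtain ⟨P', hrun, hm', -⟩ :=
    run_sim u h [] Match.nil (fun F R => by simpa using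
      (Relation.ReflTransGen.refl : Relation.ReflTransGen (HStep u) ⟨u, .halt, [], F, R⟩ _))
  exact ⟨n, P', R', hrun, match_nil_next hm' rfl, rfl⟩
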